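/- Let n ≥ 4 be divisible by 6 and let g, h be distinct nontrivial elements of ℤ₂×ℤ₂. Then the triangle-game winning operator O_{g,h} is Hermitian, positive semidefinite, satisfies O_{g,h} ≤ 1 (all eigenvalues lie in [0,1]), and fixes the cyclic cluster state: O_{g,h} |C_n⟩ = |C_n⟩. -/

import Mathlib

open Matrix Complex
open scoped ComplexOrder

noncomputable section

/-- The state space of `n` qubits, as functions on classical bit strings. -/
abbrev QState (n : ℕ) := (Fin n → Fin 2) → ℂ

/-- Operators on `n` qubits: `2^n × 2^n` complex matrices. -/
abbrev Op (n : ℕ) := Matrix (Fin n → Fin 2) (Fin n → Fin 2) ℂ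

/-- The single-qubit Pauli `X` matrix. -/
def Xmat : Matrix (Fin 2) (Fin 2) ℂ := !![0, 1; 1, 0]

/-- The single-qubit Pauli `Z` matrix. -/
def Zmat : Matrix (Fin 2) (Fin 2) ℂ := !![1, 0; 0, -1]

/-- Map a 1-based cyclic site label `j ∈ {1,…,n}` (taken mod `n`) to an index in `Fin n`. -/
def site (n : ℕ) [NeZero n] (j : ℕ) : Fin n :=
  ⟨(j + (n - 1)) % n, Nat.mod_lt _ (Nat.pos_of_ne_zero (NeZero.ne n))⟩

/-- The operator acting as the single-qubit matrix `M` on qubit `i` and as identity elsewhere. -/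
def onSite (n : ℕ) (i : Fin n) (M : Matrix (Fin 2) (Fin 2) ℂ) : Op n :=
  Matrix.of fun s t => (if ∀ k, k ≠ i → s k = t k then 1 else 0) * M (s i) (t i)

/-- Pauli `X` on (1-based, cyclic) site `j`. -/
def PX (n : ℕ) [NeZero n] (j : ℕ) : Op n := onSite n (site n j) Xmat

/-- Pauli `Z` on (1-based, cyclic) site `j`. -/
def PZ (n : ℕ) [NeZero n] (j : ℕ) : Op n := onSite n (site n j) Zmat

/-- The cyclic cluster stabilizer `K_j = Z_{j-1} X_j Z_{j+1}` (for `1 ≤ j ≤ n`). -/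
def Kstab (n : ℕ) [NeZero n] (j : ℕ) : Op n := PZ n (j - 1) * PX n j * PZ n (j + 1)

/-- The symmetry group `ℤ₂ × ℤ₂`. -/
abbrev G2 := ZMod 2 × ZMod 2

/-- The nontrivial element `x = (0,1)` of `ℤ₂ × ℤ₂`. -/
def gx : G2 := (0, 1)

/-- The nontrivial element `y = (1,0)` of `ℤ₂ × ℤ₂`. -/
def gy : G2 := (1, 0)

/-- The nontrivial element `z = (1,1)` of `ℤ₂ × ℤ₂`. -/
def gz : G2 := (1, 1)

/-- The global symmetry representation `U((a,b)) = ∏_{j odd} X_j^a ∏_{j even} X_j^b`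
on `n` qubits (`n` even), written as a product over the `n/2` two-site blocks. -/
def Usym (n : ℕ) [NeZero n] (g : G2) : Op n :=
  ((List.range (n / 2)).map
    (fun p => PX n (2 * p + 1) ^ g.1.val * PX n (2 * p + 2) ^ g.2.val)).prod

/-- Left boundary operator `V^L_p((a,b))`: `Z^b` on qubit `2p-1` and `X^b Z^a` on qubit `2p`. -/
def VL (n : ℕ) [NeZero n] (p : ℕ) (g : G2) : Op n :=
  PZ n (2 * p - 1) ^ g.2.val * (PX n (2 * p) ^ g.2.val * PZ n (2 * p) ^ g.1.val)

/-- Right boundary operator `V^R_p((a,b))`: `Z^b X^a` on qubit `2p-1` and `Z^a` on qubit `2p`. -/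
def VR (n : ℕ) [NeZero n] (p : ℕ) (g : G2) : Op n :=
  (PZ n (2 * p - 1) ^ g.2.val * PX n (2 * p - 1) ^ g.1.val) * PZ n (2 * p) ^ g.1.val

/-- Truncated symmetry `U_{[p,q]}((a,b)) = ∏_{r=p+1}^{q-1} X_{2r-1}^a X_{2r}^b`. -/
def Ustr (n : ℕ) [NeZero n] (p q : ℕ) (g : G2) : Op n :=
  ((List.range (q - (p + 1))).map
    (fun r => PX n (2 * (p + 1 + r) - 1) ^ g.1.val * PX n (2 * (p + 1 + r)) ^ g.2.val)).prod

/-- The string order parameter `S_{[p,q]}(g) = V^L_p(g) · U_{[p,q]}(g) · V^R_q(g)`. -/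
def SOPm (n : ℕ) [NeZero n] (p q : ℕ) (g : G2) : Op n :=
  VL n p g * Ustr n p q g * VR n q g

/-- The twisted string order parameter
`T_{[p,q]}^{(g,h)} = V^R_q(g) · U(h) · V^L_p(g) · U_{[p,q]}(g)`. -/
def TSOP (n : ℕ) [NeZero n] (p q : ℕ) (g h : G2) : Op n :=
  VR n q g * Usym n h * VL n p g * Ustr n p q g

/-- The triangle-game winning operator
`O_{g,h} = (1/32)(12·1 + 12 U(g) + U(h) + U(gh) − 3T − 3U(g)T)` with `T = T_{[1,n/6+1]}^{(g,h)}`. -/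
def Owin (n : ℕ) [NeZero n] (g h : G2) : Op n :=
  (32 : ℂ)⁻¹ • (12 • (1 : Op n) + 12 • Usym n g + Usym n h + Usym n (g + h)
    - 3 • TSOP n 1 (n / 6 + 1) g h - 3 • (Usym n g * TSOP n 1 (n / 6 + 1) g h))

/-- The `n`-fold tensor product `|+⟩^{⊗n}`, with all amplitudes `(1/√2)^n`. -/
def plusState (n : ℕ) : QState n := fun _ => (((Real.sqrt 2)⁻¹ : ℝ) : ℂ) ^ n

/-- The controlled-`Z` gate between (1-based, cyclic) sites `j` and `k`. -/
def CZm (n : ℕ) [NeZero n] (j k : ℕ) : Op n :=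
  Matrix.of fun s t =>
    if s = t then (if s (site n j) = 1 ∧ s (site n k) = 1 then -1 else 1) else 0

/-- The `n`-qubit cyclic cluster state `|C_n⟩ = (∏_{j=1}^n CZ_{j,j+1}) |+⟩^{⊗n}`. -/
def cluster (n : ℕ) [NeZero n] : QState n :=
  (((List.range n).map (fun j => CZm n (j + 1) (j + 2))).prod).mulVec (plusState n)

/-!
Write `A = U(g)`, `B = U(h)` and `C = T`. All three are Pauli operators `±Z^c X^F` whose `Z`- and
`X`-parts overlap evenly, hence Hermitian involutions; `A` commutes with `B` and `C`, and
`U(gh) = AB`. Then `O = P·Q` with `P = (1 + A)/2` a projection and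
`Q = (12 + B - 3C)/16 = 1/2 + (1 + B)/16 + 3(1 - C)/16` an operator commuting with `P` and lying
between `1/2` and `1`, so `0 ≤ O ≤ 1`.

In the computational basis `|C_n⟩ ∝ ∑_s (-1)^{φ(s)} |s⟩` with `φ(s) = ∑ s_i s_{i+1}`. A Pauli
operator `(-1)^ε Z^c X^F` whose `Z`-part `c` is that of the product of the cluster stabilizers over
the support of `F` multiplies `|C_n⟩` by `(-1)^{ε + φ(F)}`. For `U(k)` this sign is `+1` as `n` is
even; for `T` it is `(-1)^{g₂h₁ + g₁h₂} = -1` because `g ≠ h` are nontrivial. Hence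
`O|C_n⟩ = (12 + 12 + 1 + 1 + 3 + 3)/32 · |C_n⟩ = |C_n⟩`.
-/

section StarAlgebra

variable {R : Type*} [Ring R] [StarRing R] [Algebra ℝ R] [StarModule ℝ R] {a : R}

theorem IsStarProjection.half_one_add (ha : IsSelfAdjoint a) (ha2 : a * a = 1) :
    IsStarProjection ((2⁻¹ : ℝ) • (1 + a)) where
  isIdempotentElem := by
    simp only [IsIdempotentElem, smul_mul_smul_comm, add_mul, mul_add, one_mul, mul_one, ha2]
    module
  isSelfAdjoint := (IsSelfAdjoint.all (2⁻¹ : ℝ)).smul ((IsSelfAdjoint.one R).add ha)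

end StarAlgebra

section StarOrdered

variable {R : Type*} [Ring R] [StarRing R] [PartialOrder R] [StarOrderedRing R]

theorem IsStarProjection.mul_nonneg_of_commute {p q : R} (hp : IsStarProjection p) (hq : 0 ≤ q)
    (hpq : Commute p q) : 0 ≤ p * q := by
  have h : p * q = star p * q * p := by
    rw [hp.isSelfAdjoint.star_eq, mul_assoc, ← hpq.eq, ← mul_assoc, hp.isIdempotentElem.eq]
  exact h ▸ star_left_conjugate_nonneg hq p

theorem IsStarProjection.mul_le_one_of_commute {p q : R} (hp : IsStarProjection p) (hq : q ≤ 1)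
    (hpq : Commute p q) : p * q ≤ 1 := by
  have h : 1 - p * q = (1 - p) + p * (1 - q) := by noncomm_ring
  rw [← sub_nonneg, h]
  exact add_nonneg hp.one_sub_nonneg
    (hp.mul_nonneg_of_commute (sub_nonneg.mpr hq) ((Commute.one_right p).sub_right hpq))

theorem winning_combination_mem_Icc [Algebra ℝ R] [StarModule ℝ R] {a b c : R}
    (ha : IsSelfAdjoint a) (ha2 : a * a = 1) (hb : IsSelfAdjoint b) (hb2 : b * b = 1)
    (hc : IsSelfAdjoint c) (hc2 : c * c = 1) (hab : Commute a b) (hac : Commute a c) :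
    (32⁻¹ : ℝ) • (12 • (1 : R) + 12 • a + b + a * b - 3 • c - 3 • (a * c)) ∈ Set.Icc 0 1 := by
  set p : R := (2⁻¹ : ℝ) • (1 + a)
  set q : R := (16⁻¹ : ℝ) • (12 • (1 : R) + b - 3 • c)
  have hp : IsStarProjection p := .half_one_add ha ha2
  have hpb := IsStarProjection.half_one_add hb hb2
  have hpc := IsStarProjection.half_one_add hc hc2
  have hpq : Commute p q :=
    (((Commute.one_left _).add_left
      ((((Commute.one_right a).smul_right 12).add_right hab).sub_right
        (hac.smul_right 3))).smul_left _).smul_right _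
  have hq : q = (2⁻¹ : ℝ) • 1 + (8⁻¹ : ℝ) • ((2⁻¹ : ℝ) • (1 + b))
      + (3 / 8 : ℝ) • (1 - (2⁻¹ : ℝ) • (1 + c)) := by
    module
  have hq' : 1 - q = (8⁻¹ : ℝ) • (1 - (2⁻¹ : ℝ) • (1 + b))
      + (3 / 8 : ℝ) • ((2⁻¹ : ℝ) • (1 + c)) := by
    module
  have hpq_eq : (32⁻¹ : ℝ) • (12 • (1 : R) + 12 • a + b + a * b - 3 • c - 3 • (a * c)) = p * q := by
    simp only [p, q, smul_mul_assoc, mul_smul_comm, add_mul, mul_add, mul_sub, one_mul, mul_one]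
    module
  rw [hpq_eq]
  refine ⟨hp.mul_nonneg_of_commute ?_ hpq, hp.mul_le_one_of_commute ?_ hpq⟩
  · have := (IsStarProjection.one R).nonneg
    have := hpb.nonneg
    have := hpc.one_sub_nonneg
    rw [hq]
    positivity
  · have := hpb.one_sub_nonneg
    have := hpc.nonneg
    rw [← sub_nonneg, hq']
    positivity

end StarOrdered

section MatrixOrder

open scoped MatrixOrder

variable {𝕜 ι : Type*} [RCLike 𝕜] [Fintype ι] [DecidableEq ι] {a b c : Matrix ι ι 𝕜}

theorem Matrix.posSemidef_winning_combination (ha : IsSelfAdjoint a) (ha2 : a * a = 1)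
    (hb : IsSelfAdjoint b) (hb2 : b * b = 1) (hc : IsSelfAdjoint c) (hc2 : c * c = 1)
    (hab : Commute a b) (hac : Commute a c) :
    ((32 : 𝕜)⁻¹ • (12 • 1 + 12 • a + b + a * b - 3 • c - 3 • (a * c))).PosSemidef ∧
      (1 - (32 : 𝕜)⁻¹ • (12 • 1 + 12 • a + b + a * b - 3 • c - 3 • (a * c))).PosSemidef := by
  have h := winning_combination_mem_Icc ha ha2 hb hb2 hc hc2 hab hac
  rw [RCLike.real_smul_eq_coe_smul (K := 𝕜), RCLike.ofReal_inv, RCLike.ofReal_ofNat] at h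
  exact ⟨nonneg_iff_posSemidef.mp h.1, le_iff.mp h.2⟩

end MatrixOrder

namespace Pauli

lemma zmod2_cases (a : ZMod 2) : a = 0 ∨ a = 1 := by
  revert a; decide

def sgn (a : ZMod 2) : ℂ := if a = 0 then 1 else -1

@[simp] lemma sgn_zero : sgn 0 = 1 := rfl

@[simp] lemma sgn_one : sgn 1 = -1 := rfl

lemma sgn_add (a b : ZMod 2) : sgn (a + b) = sgn a * sgn b := by
  rcases zmod2_cases a with rfl | rfl <;> rcases zmod2_cases b with rfl | rfl <;>
    simp [(by decide : (1 + 1 : ZMod 2) = 0)]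

@[simp] lemma sgn_mul_self (a : ZMod 2) : sgn a * sgn a = 1 := by
  rw [← sgn_add, CharTwo.add_self_eq_zero, sgn_zero]

@[simp] lemma star_sgn (a : ZMod 2) : star (sgn a) = sgn a := by
  unfold sgn; split_ifs <;> simp

variable {n : ℕ}

lemma bitVec_add_self (F : Fin n → ZMod 2) : F + F = 0 :=
  funext fun i => CharTwo.add_self_eq_zero (F i)

/-- `Fin 2` and `ZMod 2` are definitionally equal: `bits` reads a computational basis label
as a vector over `ZMod 2`. -/
def bits : (Fin n → Fin 2) ≃ (Fin n → ZMod 2) := Equiv.refl _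

lemma eq_bits_symm_add_comm {s t : Fin n → Fin 2} {F : Fin n → ZMod 2} :
    t = bits.symm (bits s + F) ↔ s = bits.symm (bits t + F) := by
  simp only [Equiv.eq_symm_apply]
  constructor <;> intro h <;> rw [h, add_assoc, bitVec_add_self, add_zero]

/-- The Pauli operator `(-1)^ε Z^c X^F`, with `Z`-part `c` and `X`-part `F`. -/
def pauli (ε : ZMod 2) (c F : Fin n → ZMod 2) : Op n :=
  Matrix.of fun s t => if t = bits.symm (bits s + F) then sgn ε * sgn (c ⬝ᵥ bits s) else 0

lemma pauli_zero : (pauli 0 0 0 : Op n) = 1 := by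
  ext s t
  simp [pauli, one_apply, eq_comm]

lemma pauli_mul (ε ε' : ZMod 2) (c c' F F' : Fin n → ZMod 2) :
    (pauli ε c F : Op n) * pauli ε' c' F' = pauli (ε + ε' + c' ⬝ᵥ F) (c + c') (F + F') := by
  ext s t
  simp only [mul_apply, pauli, of_apply, ite_mul, zero_mul, Finset.sum_ite_eq',
    Finset.mem_univ, if_true, Equiv.apply_symm_apply, add_assoc, dotProduct_add,
    add_dotProduct, sgn_add]
  split_ifs <;> ring

lemma conjTranspose_pauli (ε : ZMod 2) (c F : Fin n → ZMod 2) :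
    (pauli ε c F : Op n)ᴴ = pauli (ε + c ⬝ᵥ F) c F := by
  ext s t
  simp only [conjTranspose_apply, pauli, of_apply]
  by_cases h : t = bits.symm (bits s + F)
  · rw [if_pos (eq_bits_symm_add_comm.mp h), if_pos h, h, Equiv.apply_symm_apply]
    simp only [star_mul', star_sgn, dotProduct_add, sgn_add]
    ring
  · rw [if_neg (mt eq_bits_symm_add_comm.mpr h), if_neg h, star_zero]

lemma pauli_mulVec (ε : ZMod 2) (c F : Fin n → ZMod 2) (v : QState n) :
    pauli ε c F *ᵥ v = fun s => sgn ε * sgn (c ⬝ᵥ bits s) * v (bits.symm (bits s + F)) := by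
  ext s
  simp [mulVec, dotProduct, pauli, ite_mul]

lemma isSelfAdjoint_pauli {ε : ZMod 2} {c F : Fin n → ZMod 2} (h : c ⬝ᵥ F = 0) :
    IsSelfAdjoint (pauli ε c F : Op n) := by
  rw [IsSelfAdjoint, star_eq_conjTranspose, conjTranspose_pauli, h, add_zero]

lemma pauli_mul_self {ε : ZMod 2} {c F : Fin n → ZMod 2} (h : c ⬝ᵥ F = 0) :
    (pauli ε c F : Op n) * pauli ε c F = 1 := by
  rw [pauli_mul, h, add_zero, CharTwo.add_self_eq_zero, bitVec_add_self, bitVec_add_self,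
    pauli_zero]

lemma commute_pauli {ε ε' : ZMod 2} {c c' F F' : Fin n → ZMod 2} (h : c' ⬝ᵥ F = c ⬝ᵥ F') :
    Commute (pauli ε c F : Op n) (pauli ε' c' F') := by
  rw [Commute, SemiconjBy, pauli_mul, pauli_mul, h, add_comm c, add_comm F, add_comm ε]

lemma eq_bits_symm_add_single_iff {s t : Fin n → Fin 2} {i : Fin n} {v : ZMod 2} :
    t = bits.symm (bits s + Pi.single i v) ↔
      (∀ k, k ≠ i → s k = t k) ∧ bits t i = bits s i + v := by
  rw [Equiv.eq_symm_apply, funext_iff]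
  constructor
  · intro h
    refine ⟨fun k hk => ?_, by simpa using h i⟩
    have hk' := h k
    simp only [Pi.add_apply, Pi.single_apply, hk, if_false, add_zero] at hk'
    exact hk'.symm
  · rintro ⟨hoff, hi⟩ k
    by_cases hk : k = i
    · subst hk; simpa using hi
    · simp only [Pi.add_apply, Pi.single_apply, hk, if_false, add_zero]
      exact (hoff k hk).symm

lemma Xmat_apply (a b : Fin 2) : Xmat a b = if b ≠ a then 1 else 0 := by
  fin_cases a <;> fin_cases b <;> simp [Xmat]

lemma Zmat_apply (a b : Fin 2) : Zmat a b = if b = a then sgn a else 0 := by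
  fin_cases a <;> fin_cases b <;> simp [Zmat] <;> rfl

lemma onSite_Xmat (i : Fin n) : onSite n i Xmat = pauli 0 0 (Pi.single i 1) := by
  ext s t
  simp only [onSite, pauli, of_apply, eq_bits_symm_add_single_iff, sgn_zero, zero_dotProduct,
    mul_one, Xmat_apply]
  by_cases h : ∀ k, k ≠ i → s k = t k
  · have : bits t i = bits s i + 1 ↔ t i ≠ s i := by
      change t i = s i + 1 ↔ _
      generalize s i = a; generalize t i = b
      revert a b; decide
    simp only [if_pos h, one_mul, this, and_iff_right h]
  · simp [h]

lemma onSite_Zmat (i : Fin n) : onSite n i Zmat = pauli 0 (Pi.single i 1) 0 := by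
  ext s t
  simp only [onSite, pauli, of_apply, add_zero, Equiv.symm_apply_apply, sgn_zero, one_mul,
    single_dotProduct, Zmat_apply]
  by_cases hst : t = s
  · subst hst; simp; rfl
  · have : ¬ ((∀ k, k ≠ i → s k = t k) ∧ t i = s i) := fun ⟨hoff, hi⟩ =>
      hst (funext fun k => by by_cases hk : k = i <;> simp_all)
    simp only [hst, if_false]
    split_ifs <;> simp_all

lemma prod_map_diagonal_sgn (m : ℕ) (f : ℕ → (Fin n → Fin 2) → ZMod 2) :
    ((List.range m).map fun j => (diagonal fun s => sgn (f j s) : Op n)).prod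
      = diagonal fun s => sgn (∑ j ∈ Finset.range m, f j s) := by
  induction m with
  | zero => simp [diagonal_one]
  | succ m ih =>
    simp only [List.range_succ, List.map_append, List.prod_append, ih, List.map_cons,
      List.map_nil, List.prod_cons, List.prod_nil, mul_one, diagonal_mul_diagonal,
      Finset.sum_range_succ, sgn_add]

/-- The `X`-part of `U(g)`, on 0-based sites. -/
def xPattern (g : G2) : Fin n → ZMod 2 := fun i => if 2 ∣ i.val then g.1 else g.2

def xPatternOn (g : G2) (lo hi : ℕ) : Fin n → ZMod 2 :=
  fun i => if lo ≤ i.val ∧ i.val < hi then xPattern g i else 0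

lemma xPattern_add (g h : G2) : (xPattern (g + h) : Fin n → ZMod 2) = xPattern g + xPattern h := by
  ext i
  simp only [xPattern, Pi.add_apply, Prod.fst_add, Prod.snd_add]
  split_ifs <;> rfl

/-- The `Z`-part of `T_{[1,q]}^{(g,h)}`, on 0-based sites. -/
def tZ (g : G2) (q : ℕ) : Fin n → ZMod 2 := fun i =>
  if i.val = 0 ∨ i.val = 2 * q - 2 then g.2 else if i.val = 1 ∨ i.val = 2 * q - 1 then g.1 else 0

lemma tZ_eq_sum_single {q : ℕ} (hq : 2 ≤ q) (hqn : 2 * q ≤ n) (g : G2) :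
    (tZ g q : Fin n → ZMod 2) = Pi.single ⟨0, by omega⟩ g.2 + Pi.single ⟨1, by omega⟩ g.1
      + Pi.single ⟨2 * q - 2, by omega⟩ g.2 + Pi.single ⟨2 * q - 1, by omega⟩ g.1 := by
  ext ⟨i, hi⟩
  simp only [tZ, Pi.add_apply, Pi.single_apply, Fin.mk.injEq]
  split_ifs <;> first | omega | simp

lemma tZ_dotProduct {q : ℕ} (hq : 2 ≤ q) (hqn : 2 * q ≤ n) (g : G2) (X : Fin n → ZMod 2) :
    tZ g q ⬝ᵥ X = g.2 * X ⟨0, by omega⟩ + g.1 * X ⟨1, by omega⟩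
      + g.2 * X ⟨2 * q - 2, by omega⟩ + g.1 * X ⟨2 * q - 1, by omega⟩ := by
  simp only [tZ_eq_sum_single hq hqn, add_dotProduct, single_dotProduct]

lemma tZ_dotProduct_xPattern {q : ℕ} (hq : 2 ≤ q) (hqn : 2 * q ≤ n) (g k : G2) :
    tZ g q ⬝ᵥ (xPattern k : Fin n → ZMod 2) = 0 := by
  rw [tZ_dotProduct hq hqn]
  simp only [xPattern]
  rw [if_pos (by omega), if_neg (by omega), if_pos (by omega), if_neg (by omega)]
  linear_combination (g.2 * k.1 + g.1 * k.2) * CharTwo.two_eq_zero (R := ZMod 2)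

lemma tZ_dotProduct_xPatternOn {q : ℕ} (hq : 2 ≤ q) (hqn : 2 * q ≤ n) (g : G2) :
    tZ g q ⬝ᵥ (xPatternOn g 1 (2 * q - 1) : Fin n → ZMod 2) = 0 := by
  rw [tZ_dotProduct hq hqn]
  simp only [xPatternOn, xPattern]
  split_ifs <;> first | omega | linear_combination (g.1 * g.2) * CharTwo.two_eq_zero (R := ZMod 2)

section

variable [NeZero n]

lemma site_add_one {k : ℕ} (hk : k < n) : site n (k + 1) = ⟨k, hk⟩ := by
  ext
  simp only [site]
  rw [show k + 1 + (n - 1) = k + n by have := NeZero.pos n; omega, Nat.add_mod_right,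
    Nat.mod_eq_of_lt hk]

lemma site_val_add_two (i : Fin n) : site n (i.val + 2) = i + 1 := by
  ext
  simp only [site, Fin.val_add, Fin.val_one']
  rw [show i.val + 2 + (n - 1) = i.val + 1 + n by have := NeZero.pos n; omega,
    Nat.add_mod_right, Nat.add_mod_mod]

lemma site_eq {j : ℕ} (h1 : 1 ≤ j) (hj : j ≤ n) : site n j = ⟨j - 1, by omega⟩ := by
  obtain ⟨k, rfl⟩ : ∃ k, j = k + 1 := ⟨j - 1, by omega⟩
  exact site_add_one (by omega)

lemma PX_pow (j : ℕ) (v : ZMod 2) : PX n j ^ v.val = pauli 0 0 (Pi.single (site n j) v) := by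
  rcases zmod2_cases v with rfl | rfl
  · rw [ZMod.val_zero, pow_zero, Pi.single_zero, pauli_zero]
  · rw [ZMod.val_one, pow_one, PX, onSite_Xmat]

lemma PZ_pow (j : ℕ) (v : ZMod 2) : PZ n j ^ v.val = pauli 0 (Pi.single (site n j) v) 0 := by
  rcases zmod2_cases v with rfl | rfl
  · rw [ZMod.val_zero, pow_zero, Pi.single_zero, pauli_zero]
  · rw [ZMod.val_one, pow_one, PZ, onSite_Zmat]

lemma val_add_one_eq (i : Fin n) : (i + 1).val = if i.val + 1 = n then 0 else i.val + 1 := by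
  rw [Fin.val_add, Fin.val_one', Nat.add_mod_mod]
  split_ifs with h
  · rw [h, Nat.mod_self]
  · exact Nat.mod_eq_of_lt (by omega)

def clusterPhase (F : Fin n → ZMod 2) : ZMod 2 := ∑ i, F i * F (i + 1)

lemma clusterPhase_add {A F c : Fin n → ZMod 2} (hc : ∀ i, c (i + 1) = F i + F (i + 1 + 1)) :
    clusterPhase (A + F) = clusterPhase A + clusterPhase F + c ⬝ᵥ A := by
  have shift (f : Fin n → ZMod 2) : ∑ i, f (i + 1) = ∑ i, f i :=
    Equiv.sum_comp (Equiv.addRight 1) f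
  have hcA : c ⬝ᵥ A = ∑ i, (F i * A (i + 1) + A i * F (i + 1)) := by
    rw [dotProduct, ← shift (fun i => c i * A i), Finset.sum_add_distrib,
      ← shift (fun i => A i * F (i + 1)), ← Finset.sum_add_distrib]
    exact Finset.sum_congr rfl fun i _ => by rw [hc]; ring
  simp only [clusterPhase, hcA, Pi.add_apply, ← Finset.sum_add_distrib]
  exact Finset.sum_congr rfl fun i _ => by ring

lemma xPattern_add_one_add_one (hn : 2 ∣ n) (g : G2) (i : Fin n) :
    xPattern g (i + 1 + 1) = xPattern g i := by
  simp only [xPattern, val_add_one_eq]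
  split_ifs <;> first | rfl | omega

lemma xPattern_mul_xPattern_add_one (hn : 2 ∣ n) (g : G2) (i : Fin n) :
    xPattern g i * xPattern g (i + 1) = g.1 * g.2 := by
  simp only [xPattern, val_add_one_eq]
  split_ifs <;> first | omega | ring

lemma clusterPhase_xPattern (hn : 2 ∣ n) (g : G2) :
    clusterPhase (xPattern g : Fin n → ZMod 2) = 0 := by
  simp only [clusterPhase, xPattern_mul_xPattern_add_one hn, Finset.sum_const, Finset.card_univ,
    Fintype.card_fin, nsmul_eq_mul, (ZMod.natCast_eq_zero_iff n 2).mpr hn, zero_mul]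

lemma clusterPhase_xPatternOn {q : ℕ} (hq : 2 ≤ q) (hqn : 2 * q ≤ n) (g : G2) :
    clusterPhase (xPatternOn g 1 (2 * q - 1) : Fin n → ZMod 2) = g.1 * g.2 := by
  have hterm (i : Fin n) : xPatternOn g 1 (2 * q - 1) i * xPatternOn g 1 (2 * q - 1) (i + 1)
      = if 1 ≤ i.val ∧ i.val ≤ 2 * q - 3 then g.1 * g.2 else 0 := by
    simp only [xPatternOn, xPattern, val_add_one_eq]
    split_ifs <;> first | omega | ring
  rw [clusterPhase, Finset.sum_congr rfl fun i _ => hterm i,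
    Fin.sum_univ_eq_sum_range (fun i => if 1 ≤ i ∧ i ≤ 2 * q - 3 then g.1 * g.2 else 0),
    Finset.sum_ite, Finset.sum_const_zero, add_zero, Finset.sum_const, nsmul_eq_mul]
  have hcard :
      ((Finset.range n).filter fun i => 1 ≤ i ∧ i ≤ 2 * q - 3) = Finset.Icc 1 (2 * q - 3) := by
    ext i; simp only [Finset.mem_filter, Finset.mem_range, Finset.mem_Icc]; omega
  rw [hcard, Nat.card_Icc, show 2 * q - 3 + 1 - 1 = 2 * (q - 2) + 1 by omega]
  push_cast
  rw [show (2 : ZMod 2) = 0 from rfl, zero_mul, zero_add, one_mul]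

lemma xPattern_add_xPattern_add_two (hn : 2 ∣ n) (g : G2) (i : Fin n) :
    xPattern g i + xPattern g (i + 1 + 1) = 0 := by
  rw [xPattern_add_one_add_one hn, CharTwo.add_self_eq_zero]

lemma tZ_add_one {q : ℕ} (hq : 2 ≤ q) (hqn : 2 * q + 2 ≤ n) (g : G2) (i : Fin n) :
    tZ g q (i + 1) = xPatternOn g 1 (2 * q - 1) i + xPatternOn g 1 (2 * q - 1) (i + 1 + 1) := by
  simp only [tZ, xPatternOn, xPattern, val_add_one_eq]
  split_ifs <;>
    first | rfl | omega | (simp only [false_or] at *; omega) | simp [CharTwo.add_self_eq_zero]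

end

end Pauli

open Pauli

section

variable {n : ℕ} [NeZero n]

lemma prod_blockX_eq_pauli (g : G2) (p m : ℕ) (hpm : 2 * (p + m) ≤ n) :
    ((List.range m).map fun r =>
        PX n (2 * (p + r) + 1) ^ g.1.val * PX n (2 * (p + r) + 2) ^ g.2.val).prod
      = pauli 0 0 (xPatternOn g (2 * p) (2 * (p + m))) := by
  induction m with
  | zero =>
    have : (xPatternOn g (2 * p) (2 * (p + 0)) : Fin n → ZMod 2) = 0 := by
      ext i; simp only [xPatternOn, Pi.zero_apply]; split_ifs <;> first | rfl | omega
    rw [this, pauli_zero, List.range_zero, List.map_nil, List.prod_nil]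
  | succ m ih =>
    rw [List.range_succ, List.map_append, List.prod_append, ih (by omega)]
    simp only [List.map_cons, List.map_nil, List.prod_cons, List.prod_nil, mul_one, PX_pow,
      pauli_mul, zero_dotProduct, add_zero]
    congr 1
    ext ⟨i, hi⟩
    rw [site_eq (by omega) (by omega), site_eq (by omega) (by omega)]
    simp only [xPatternOn, xPattern, Pi.add_apply, Pi.single_apply, Fin.mk.injEq]
    split_ifs <;> first | rfl | omega | simp

lemma Usym_eq_pauli (hn : 2 ∣ n) (g : G2) : Usym n g = pauli 0 0 (xPattern g) := by
  have h := prod_blockX_eq_pauli (n := n) g 0 (n / 2) (by omega)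
  simp only [zero_add, mul_zero] at h
  rw [Usym, h]
  congr 1
  ext i
  simp only [xPatternOn, if_pos (⟨Nat.zero_le _, by omega⟩ : 0 ≤ i.val ∧ i.val < 2 * (n / 2))]

lemma Ustr_eq_pauli {q : ℕ} (hq : 2 ≤ q) (hqn : 2 * q ≤ n) (g : G2) :
    Ustr n 1 q g = pauli 0 0 (xPatternOn g 2 (2 * q - 2)) := by
  have h := prod_blockX_eq_pauli (n := n) g 1 (q - 2) (by omega)
  rw [show 2 * (1 + (q - 2)) = 2 * q - 2 by omega] at h
  rw [Ustr, ← h, show q - (1 + 1) = q - 2 from rfl]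
  congr 2
  ext r
  rw [show 2 * (1 + 1 + r) - 1 = 2 * (1 + r) + 1 by omega,
    show 2 * (1 + 1 + r) = 2 * (1 + r) + 2 by omega]

lemma VL_one_eq_pauli (g : G2) :
    VL n 1 g = pauli (g.1 * g.2) (Pi.single (site n 1) g.2 + Pi.single (site n 2) g.1)
      (Pi.single (site n 2) g.2) := by
  rw [VL, PZ_pow, PX_pow, PZ_pow, pauli_mul, pauli_mul]
  simp [mul_comm]

lemma VR_eq_pauli {q : ℕ} (hq : 1 ≤ q) (hqn : 2 * q ≤ n) (g : G2) :
    VR n q g = pauli 0 (Pi.single (site n (2 * q - 1)) g.2 + Pi.single (site n (2 * q)) g.1)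
      (Pi.single (site n (2 * q - 1)) g.1) := by
  rw [VR, PZ_pow, PX_pow, PZ_pow, pauli_mul, pauli_mul,
    site_eq (j := 2 * q - 1) (by omega) (by omega), site_eq (j := 2 * q) (by omega) hqn]
  simp [Pi.single_apply, Fin.ext_iff]
  rw [if_neg (by omega)]

lemma TSOP_eq_pauli (hn : 2 ∣ n) {q : ℕ} (hq : 2 ≤ q) (hqn : 2 * q ≤ n) (g h : G2) :
    TSOP n 1 q g h = pauli (g.1 * g.2 + (g.2 * h.1 + g.1 * h.2)) (tZ g q)
      (xPattern h + xPatternOn g 1 (2 * q - 1)) := by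
  rw [TSOP, VR_eq_pauli (by omega) hqn, Usym_eq_pauli hn, VL_one_eq_pauli, Ustr_eq_pauli hq hqn,
    pauli_mul, pauli_mul, pauli_mul]
  rw [site_eq (j := 1) le_rfl (by omega), site_eq (j := 2) (by omega) (by omega),
    site_eq (j := 2 * q - 1) (by omega) (by omega), site_eq (j := 2 * q) (by omega) hqn]
  congr 1
  · simp [Pi.single_apply, Fin.ext_iff, xPattern]
    exact .inl (by rw [if_neg (by omega), if_neg (by omega), add_zero])
  · ext ⟨i, hi⟩
    simp only [tZ, Pi.add_apply, Pi.single_apply, Fin.mk.injEq, Pi.zero_apply]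
    split_ifs <;> first | rfl | omega | simp
  · ext ⟨i, hi⟩
    simp only [xPatternOn, xPattern, Pi.add_apply, Pi.single_apply, Fin.mk.injEq]
    split_ifs <;> first | rfl | omega | ring

lemma CZm_eq_diagonal (j k : ℕ) :
    CZm n j k = diagonal fun s => sgn (bits s (site n j) * bits s (site n k)) := by
  ext s t
  simp only [CZm, diagonal, of_apply]
  congr 1
  change _ = sgn (s (site n j) * s (site n k))
  generalize s (site n j) = a
  generalize s (site n k) = b
  fin_cases a <;> fin_cases b <;> rfl

lemma cluster_eq : cluster n = fun s => sgn (clusterPhase (bits s)) * (((√2)⁻¹ : ℝ) : ℂ) ^ n := by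
  simp only [cluster, CZm_eq_diagonal, prod_map_diagonal_sgn]
  ext s
  rw [mulVec_diagonal, plusState, clusterPhase,
    ← Fin.sum_univ_eq_sum_range (fun j => bits s (site n (j + 1)) * bits s (site n (j + 2)))]
  simp only [site_add_one (Fin.is_lt _), site_val_add_two]

/-- `hc` says that `c` is the `Z`-part of the product of the cluster stabilizers
`K_j = Z_{j-1} X_j Z_{j+1}` over the support of `F`. -/
lemma pauli_mulVec_cluster {ε : ZMod 2} {c F : Fin n → ZMod 2}
    (hc : ∀ i, c (i + 1) = F i + F (i + 1 + 1)) :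
    pauli ε c F *ᵥ cluster n = sgn (ε + clusterPhase F) • cluster n := by
  rw [cluster_eq, pauli_mulVec]
  ext s
  simp only [Pi.smul_apply, smul_eq_mul, Equiv.apply_symm_apply, clusterPhase_add hc, sgn_add]
  linear_combination sgn ε * sgn (clusterPhase F) * sgn (clusterPhase (bits s)) *
    (((√2)⁻¹ : ℝ) : ℂ) ^ n * sgn_mul_self (c ⬝ᵥ bits s)

lemma Usym_add (hn : 2 ∣ n) (g h : G2) : Usym n (g + h) = Usym n g * Usym n h := by
  simp [Usym_eq_pauli hn, pauli_mul, xPattern_add]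

lemma isSelfAdjoint_Usym (hn : 2 ∣ n) (g : G2) : IsSelfAdjoint (Usym n g) :=
  Usym_eq_pauli hn g ▸ isSelfAdjoint_pauli (zero_dotProduct _)

lemma Usym_mul_self (hn : 2 ∣ n) (g : G2) : Usym n g * Usym n g = 1 :=
  Usym_eq_pauli hn g ▸ pauli_mul_self (zero_dotProduct _)

lemma commute_Usym (hn : 2 ∣ n) (g h : G2) : Commute (Usym n g) (Usym n h) := by
  rw [Usym_eq_pauli hn, Usym_eq_pauli hn]
  exact commute_pauli (by simp)

lemma Usym_mulVec_cluster (hn : 2 ∣ n) (g : G2) : Usym n g *ᵥ cluster n = cluster n := by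
  rw [Usym_eq_pauli hn, pauli_mulVec_cluster fun i => (xPattern_add_xPattern_add_two hn g i).symm,
    clusterPhase_xPattern hn, add_zero, sgn_zero, one_smul]

lemma isSelfAdjoint_TSOP (hn : 2 ∣ n) {q : ℕ} (hq : 2 ≤ q) (hqn : 2 * q ≤ n) (g h : G2) :
    IsSelfAdjoint (TSOP n 1 q g h) := by
  rw [TSOP_eq_pauli hn hq hqn]
  exact isSelfAdjoint_pauli (by
    rw [dotProduct_add, tZ_dotProduct_xPattern hq hqn, tZ_dotProduct_xPatternOn hq hqn, add_zero])

lemma TSOP_mul_self (hn : 2 ∣ n) {q : ℕ} (hq : 2 ≤ q) (hqn : 2 * q ≤ n) (g h : G2) :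
    TSOP n 1 q g h * TSOP n 1 q g h = 1 := by
  rw [TSOP_eq_pauli hn hq hqn]
  exact pauli_mul_self (by
    rw [dotProduct_add, tZ_dotProduct_xPattern hq hqn, tZ_dotProduct_xPatternOn hq hqn, add_zero])

lemma commute_Usym_TSOP (hn : 2 ∣ n) {q : ℕ} (hq : 2 ≤ q) (hqn : 2 * q ≤ n) (g h : G2) :
    Commute (Usym n g) (TSOP n 1 q g h) := by
  rw [Usym_eq_pauli hn, TSOP_eq_pauli hn hq hqn]
  exact commute_pauli (by rw [tZ_dotProduct_xPattern hq hqn, zero_dotProduct])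

lemma symplectic_eq_one {g h : G2} (hg : g ≠ 0) (hh : h ≠ 0) (hgh : g ≠ h) :
    g.2 * h.1 + g.1 * h.2 = 1 := by
  revert g h; decide

lemma TSOP_mulVec_cluster (hn : 2 ∣ n) {q : ℕ} (hq : 2 ≤ q) (hqn : 2 * q + 2 ≤ n) {g h : G2}
    (hgh : g.2 * h.1 + g.1 * h.2 = 1) : TSOP n 1 q g h *ᵥ cluster n = -cluster n := by
  have hc (i : Fin n) :
      tZ g q (i + 1) = (xPatternOn g 1 (2 * q - 1) + xPattern h : Fin n → ZMod 2) i
        + (xPatternOn g 1 (2 * q - 1) + xPattern h : Fin n → ZMod 2) (i + 1 + 1) := by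
    rw [Pi.add_apply, Pi.add_apply, tZ_add_one hq hqn, xPattern_add_one_add_one hn]
    linear_combination (-xPattern h i) * CharTwo.two_eq_zero (R := ZMod 2)
  rw [TSOP_eq_pauli hn hq (by omega), add_comm (xPattern h), pauli_mulVec_cluster hc,
    clusterPhase_add (c := 0) fun i => (xPattern_add_xPattern_add_two hn h i).symm,
    clusterPhase_xPatternOn hq (by omega),
    clusterPhase_xPattern hn, zero_dotProduct, hgh]
  rw [show g.1 * g.2 + 1 + (g.1 * g.2 + 0 + 0) = 1 by
    linear_combination (g.1 * g.2) * CharTwo.two_eq_zero (R := ZMod 2)]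
  rw [sgn_one, neg_one_smul]

end

theorem Owin_is_valid_effect (n : ℕ) [NeZero n] (hn : 6 ∣ n)
    (g h : G2) (hg : g ≠ 0) (hh : h ≠ 0) (hgh : g ≠ h) :
    (Owin n g h).IsHermitian ∧
    (Owin n g h).PosSemidef ∧
    ((1 : Op n) - Owin n g h).PosSemidef ∧
    (Owin n g h).mulVec (cluster n) = cluster n := by
  have hn6 : 6 ≤ n := Nat.le_of_dvd (NeZero.pos n) hn
  have hn2 : 2 ∣ n := Nat.dvd_trans ⟨3, rfl⟩ hn
  have hq : 2 ≤ n / 6 + 1 := by omega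
  have hqn : 2 * (n / 6 + 1) + 2 ≤ n := by omega
  set T := TSOP n 1 (n / 6 + 1) g h
  have hO : Owin n g h = (32 : ℂ)⁻¹ • (12 • 1 + 12 • Usym n g + Usym n h + Usym n g * Usym n h
      - 3 • T - 3 • (Usym n g * T)) := by
    rw [Owin, Usym_add hn2]
  obtain ⟨hpos, hle⟩ := Matrix.posSemidef_winning_combination
    (isSelfAdjoint_Usym hn2 g) (Usym_mul_self hn2 g) (isSelfAdjoint_Usym hn2 h)
    (Usym_mul_self hn2 h) (isSelfAdjoint_TSOP hn2 hq (by omega) g h)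
    (TSOP_mul_self hn2 hq (by omega) g h) (commute_Usym hn2 g h)
    (commute_Usym_TSOP hn2 hq (by omega) g h)
  rw [hO]
  refine ⟨hpos.isHermitian, hpos, hle, ?_⟩
  have hT : T *ᵥ cluster n = -cluster n :=
    TSOP_mulVec_cluster hn2 hq hqn (symplectic_eq_one hg hh hgh)
  simp only [smul_mulVec, add_mulVec, sub_mulVec, ← mulVec_mulVec, one_mulVec,
    Usym_mulVec_cluster hn2, hT, mulVec_neg]
  module
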